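/- Let (μ_t^N)_t be, for each N, a sequence of random probability vectors on a finite set S evolving by μ_{t+1}^N(s) = Σ_{s'} p(s', s, c^N_t) μ_t^N(s') + M_{t+1}^N(s), where c^N_t = g(μ_t^N) for a continuous function g, p is jointly continuous, and the error terms satisfy M_{t+1}^N(s) → 0 in probability as N → ∞ for each t and s. If μ_0^N → μ̄_0 in probability for a (possibly random) limit μ̄_0, then for every t ∈ ℕ, μ_t^N → μ̄_t in probability, where μ̄_t is defined recursively by μ̄_{t+1}(s) = Σ_{s'} p(s', s, g(μ̄_t)) μ̄_{t'}(s') with μ̄_{t'} = μ̄_t. -/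

import Mathlib

open MeasureTheory Filter

theorem stmt12 {Ω : Type*} [MeasurableSpace Ω] (μ : Measure Ω) [IsProbabilityMeasure μ]
    {S : Type*} [Fintype S]
    (p : S → S → ℝ → ℝ) (g : (S → ℝ) → ℝ)
    (hg : Continuous g) (hp : ∀ s' s, Continuous (p s' s))
    (hp01 : ∀ s' s c, 0 ≤ p s' s c ∧ p s' s c ≤ 1)
    (μN : ℕ → ℕ → Ω → S → ℝ) (M : ℕ → ℕ → Ω → S → ℝ) (μbar : ℕ → Ω → S → ℝ)
    -- μ^N_t and μ̄_t are probability vectors on S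
    (hsimplexN : ∀ N t ω, (∀ s, 0 ≤ μN N t ω s) ∧ ∑ s, μN N t ω s = 1)
    (hsimplexbar : ∀ t ω, (∀ s, 0 ≤ μbar t ω s) ∧ ∑ s, μbar t ω s = 1)
    -- evolution of μ^N with error terms M^N
    (hevol : ∀ N t ω s,
      μN N (t + 1) ω s = (∑ s', p s' s (g (μN N t ω)) * μN N t ω s') + M N (t + 1) ω s)
    -- the error terms vanish in probability
    (hM : ∀ t s, ∀ ε : ℝ, 0 < ε →
      Tendsto (fun N : ℕ => (μ {ω | ε ≤ |M N (t + 1) ω s|}).toReal) atTop (nhds 0))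
    -- the mean-field recursion
    (hbar : ∀ t ω s, μbar (t + 1) ω s = ∑ s', p s' s (g (μbar t ω)) * μbar t ω s')
    -- initial convergence in probability
    (h0 : ∀ s, ∀ ε : ℝ, 0 < ε →
      Tendsto (fun N : ℕ => (μ {ω | ε ≤ |μN N 0 ω s - μbar 0 ω s|}).toReal) atTop (nhds 0)) :
    ∀ t s, ∀ ε : ℝ, 0 < ε →
      Tendsto (fun N : ℕ => (μ {ω | ε ≤ |μN N t ω s - μbar t ω s|}).toReal) atTop (nhds 0) := by
  classical
  -- the compact simplex
  set K : Set (S → ℝ) := {q | (∀ s, 0 ≤ q s) ∧ ∑ s, q s = 1} with hKdef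
  have hKsub : K ⊆ Set.pi Set.univ (fun _ : S => Set.Icc (0:ℝ) 1) := by
    intro q hq s' _
    refine ⟨hq.1 s', ?_⟩
    calc q s' ≤ ∑ s, q s := Finset.single_le_sum (fun i _ => hq.1 i) (Finset.mem_univ s')
    _ = 1 := hq.2
  have hKclosed : IsClosed K := by
    have h1 : IsClosed {q : S → ℝ | ∀ s, 0 ≤ q s} := by
      have : {q : S → ℝ | ∀ s, 0 ≤ q s} = ⋂ s, {q | 0 ≤ q s} := by ext q; simp
      rw [this]
      exact isClosed_iInter fun s => isClosed_le continuous_const (continuous_apply s)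
    have h2 : IsClosed {q : S → ℝ | ∑ s, q s = 1} :=
      isClosed_eq (continuous_finset_sum _ fun s _ => continuous_apply s) continuous_const
    exact h1.inter h2
  have hKcompact : IsCompact K := by
    refine IsCompact.of_isClosed_subset ?_ hKclosed hKsub
    exact isCompact_univ_pi fun _ => isCompact_Icc
  intro t
  induction t with
  | zero => exact h0
  | succ t ih =>
    intro s ε hε
    -- the one-step map
    set F : (S → ℝ) → ℝ := fun q => ∑ s', p s' s (g q) * q s' with hFdef
    have hFcont : Continuous F :=
      continuous_finset_sum _ fun s' _ => ((hp s' s).comp hg).mul (continuous_apply s')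
    have hUC : UniformContinuousOn F K :=
      hKcompact.uniformContinuousOn_of_continuous hFcont.continuousOn
    rw [Metric.uniformContinuousOn_iff] at hUC
    obtain ⟨δ, hδpos, hδ⟩ := hUC (ε / 2) (by linarith)
    -- key inclusion
    have key : ∀ N, {ω | ε ≤ |μN N (t + 1) ω s - μbar (t + 1) ω s|} ⊆
        (⋃ s' ∈ (Finset.univ : Finset S), {ω | δ ≤ |μN N t ω s' - μbar t ω s'|}) ∪
          {ω | ε / 2 ≤ |M N (t + 1) ω s|} := by
      intro N ω hω
      simp only [Set.mem_setOf_eq] at hω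
      by_cases hMcase : ε / 2 ≤ |M N (t + 1) ω s|
      · exact Or.inr hMcase
      · left
        push_neg at hMcase
        have hω' : ε / 2 ≤ |F (μN N t ω) - F (μbar t ω)| := by
          have heq : μN N (t + 1) ω s - μbar (t + 1) ω s
              = (F (μN N t ω) - F (μbar t ω)) + M N (t + 1) ω s := by
            rw [hevol, hbar, hFdef]; ring
          have := abs_add_le (F (μN N t ω) - F (μbar t ω)) (M N (t + 1) ω s)
          rw [heq] at hω
          linarith [hω.trans this]
        have hdist : δ ≤ dist (μN N t ω) (μbar t ω) := by
          by_contra h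
          push_neg at h
          have := hδ (μN N t ω) (hsimplexN N t ω) (μbar t ω) (hsimplexbar t ω) h
          rw [Real.dist_eq] at this
          linarith
        have : ¬ ∀ s', dist (μN N t ω s') (μbar t ω s') < δ := by
          intro hall
          have := (dist_pi_lt_iff hδpos).2 hall
          linarith
        push_neg at this
        obtain ⟨s', hs'⟩ := this
        rw [Real.dist_eq] at hs'
        exact Set.mem_biUnion (Finset.mem_univ s') hs'
    -- measure bound
    have bound : ∀ N, (μ {ω | ε ≤ |μN N (t + 1) ω s - μbar (t + 1) ω s|}).toReal ≤
        (∑ s', (μ {ω | δ ≤ |μN N t ω s' - μbar t ω s'|}).toReal) +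
          (μ {ω | ε / 2 ≤ |M N (t + 1) ω s|}).toReal := by
      intro N
      have h1 : μ {ω | ε ≤ |μN N (t + 1) ω s - μbar (t + 1) ω s|} ≤
          (∑ s', μ {ω | δ ≤ |μN N t ω s' - μbar t ω s'|}) +
            μ {ω | ε / 2 ≤ |M N (t + 1) ω s|} :=
        (measure_mono (key N)).trans ((measure_union_le _ _).trans
          (add_le_add_left (measure_biUnion_finset_le _ _) _))
      have hfin : (∑ s', μ {ω | δ ≤ |μN N t ω s' - μbar t ω s'|}) +
            μ {ω | ε / 2 ≤ |M N (t + 1) ω s|} ≠ ⊤ := by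
        refine ENNReal.add_ne_top.2 ⟨?_, measure_ne_top _ _⟩
        exact (ENNReal.sum_lt_top.2 fun _ _ => (measure_lt_top μ _)).ne
      calc (μ {ω | ε ≤ |μN N (t + 1) ω s - μbar (t + 1) ω s|}).toReal
          ≤ ((∑ s', μ {ω | δ ≤ |μN N t ω s' - μbar t ω s'|}) +
            μ {ω | ε / 2 ≤ |M N (t + 1) ω s|}).toReal := ENNReal.toReal_mono hfin h1
        _ = _ := by
            rw [ENNReal.toReal_add (ENNReal.add_ne_top.1 hfin).1 (measure_ne_top _ _),
              ENNReal.toReal_sum (fun _ _ => measure_ne_top _ _)]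
    -- squeeze
    have hlim : Tendsto (fun N : ℕ =>
        (∑ s', (μ {ω | δ ≤ |μN N t ω s' - μbar t ω s'|}).toReal) +
          (μ {ω | ε / 2 ≤ |M N (t + 1) ω s|}).toReal) atTop (nhds 0) := by
      have h1 : Tendsto (fun N : ℕ =>
          ∑ s', (μ {ω | δ ≤ |μN N t ω s' - μbar t ω s'|}).toReal) atTop (nhds 0) := by
        have := tendsto_finset_sum (Finset.univ : Finset S)
          (fun s' _ => ih s' δ hδpos)
        simpa using this
      simpa using h1.add (hM t s (ε / 2) (by linarith))
    exact squeeze_zero (fun N => ENNReal.toReal_nonneg) bound hlim
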